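/- Let n, m ≥ 1, let g : ℝ^n → ℝ^m be any function, and let H ⊆ ℝ^n be a countable set. Let W be a random n × m real matrix whose entries are mutually independent random variables, each with an atomless distribution. Define F_W : ℝ^n → ℝ^n by F_W(h) = h + W g(h) (matrix–vector product). Then almost surely F_W is injective on H: P( for all h₁, h₂ ∈ H with h₁ ≠ h₂, F_W(h₁) ≠ F_W(h₂) ) = 1. -/

import Mathlib

/-!
If `h₁ ≠ h₂` collide, i.e. `h₁ + W g(h₁) = h₂ + W g(h₂)`, then `g(h₁) ≠ g(h₂)` and
`W (g(h₁) - g(h₂)) = h₂ - h₁`. Pick a column `j` where `g(h₁) - g(h₂)` does not vanish and any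
row `i`: the `i`-th coordinate of this identity pins `W i j` to a function of the other entries
of row `i`, which are independent of it, so by atomlessness a collision of the pair has
probability zero. There are only countably many pairs in `H`.
-/

open MeasureTheory ProbabilityTheory Matrix

section

variable {Ω : Type*} [MeasurableSpace Ω] {P : Measure Ω}

theorem Set.Countable.ae_pairwise {α : Type*} {H : Set α} {r : Ω → α → α → Prop}
    (hH : H.Countable) (hr : ∀ a ∈ H, ∀ b ∈ H, a ≠ b → ∀ᵐ ω ∂P, r ω a b) :
    ∀ᵐ ω ∂P, H.Pairwise (r ω) := by
  refine (ae_ball_iff hH).mpr fun a ha => (ae_ball_iff hH).mpr fun b hb => ?_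
  rcases eq_or_ne a b with rfl | hab
  · exact ae_of_all _ fun _ hne => absurd rfl hne
  · filter_upwards [hr a ha b hb hab] with ω hω _ using hω

variable [IsFiniteMeasure P]

namespace ProbabilityTheory

theorem IndepFun.measure_eq_eq_zero_of_atomless
    {α : Type*} [MeasurableSpace α] [MeasurableEq α] {X Z : Ω → α}
    (hX : Measurable X) (hZ : Measurable Z) (hXZ : IndepFun X Z P)
    (hatom : ∀ x, P.map X {x} = 0) :
    P {ω | X ω = Z ω} = 0 := by
  have hdiag : MeasurableSet {p : α × α | p.1 = p.2} :=
    measurableSet_eq_fun measurable_fst measurable_snd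
  have hlaw : P.map (fun ω => (X ω, Z ω)) = (P.map X).prod (P.map Z) :=
    (indepFun_iff_map_prod_eq_prod_map_map hX.aemeasurable hZ.aemeasurable).mp hXZ
  calc P {ω | X ω = Z ω} = P.map (fun ω => (X ω, Z ω)) {p | p.1 = p.2} :=
        (Measure.map_apply (hX.prodMk hZ) hdiag).symm
    _ = ∫⁻ z, P.map X {z} ∂(P.map Z) := by
        rw [hlaw, Measure.prod_apply_symm hdiag]
        rfl
    _ = 0 := by simp [hatom]

theorem iIndepFun.measure_sum_mul_eq_zero {ι : Type*} [Fintype ι]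
    {X : ι → Ω → ℝ} (hmeas : ∀ i, Measurable (X i)) (hindep : iIndepFun X P)
    {u : ι → ℝ} {j : ι} (hu : u j ≠ 0) (hatom : ∀ x, P.map (X j) {x} = 0) (c : ℝ) :
    P {ω | ∑ i, X i ω * u i = c} = 0 := by
  classical
  set rest : Ω → ℝ := fun ω => ∑ i ∈ Finset.univ.erase j, X i ω * u i
  have hrest_meas : Measurable rest := Finset.measurable_sum _ fun i _ => (hmeas i).mul_const _
  have hindep_rest : IndepFun (fun ω => X j ω * u j) rest P := by
    have := (hindep.comp (fun i x => x * u i) fun i => measurable_id.mul_const _)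
      |>.indepFun_finsetSum_of_notMem (fun i => (hmeas i).mul_const _)
        (Finset.notMem_erase j Finset.univ)
    simpa only [Finset.sum_fn, Function.comp_def] using this.symm
  set Z : Ω → ℝ := fun ω => (c - rest ω) / u j
  have hZ_meas : Measurable Z := (measurable_const.sub hrest_meas).div_const _
  have hXZ : IndepFun (X j) Z P := by
    convert hindep_rest.comp (φ := fun x => x / u j) (ψ := fun y => (c - y) / u j)
      (measurable_id.div_const _) ((measurable_const.sub measurable_id).div_const _) using 1
    · ext ω
      simp [hu]
    · rfl
  refine measure_mono_null (fun ω hω => ?_)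
    (hXZ.measure_eq_eq_zero_of_atomless (hmeas j) hZ_meas hatom)
  have hsplit := Finset.add_sum_erase Finset.univ (fun i => X i ω * u i) (Finset.mem_univ j)
  simp only [Set.mem_ofPred_eq, Z, rest] at hω ⊢
  rw [eq_div_iff hu]
  linarith

end ProbabilityTheory

variable {ι κ : Type*} [Fintype κ] {W : Ω → Matrix ι κ ℝ}

theorem measure_mulVec_apply_eq_zero (hmeas : ∀ i j, Measurable fun ω => W ω i j)
    (hindep : iIndepFun (fun p : ι × κ => fun ω => W ω p.1 p.2) P)
    (hatom : ∀ i j x, P.map (fun ω => W ω i j) {x} = 0)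
    {u : κ → ℝ} (hu : u ≠ 0) (i : ι) (c : ℝ) :
    P {ω | (W ω *ᵥ u) i = c} = 0 := by
  obtain ⟨j, hj⟩ := Function.ne_iff.mp hu
  exact (hindep.precomp (Prod.mk_right_injective i)).measure_sum_mul_eq_zero
    (fun j => hmeas i j) hj (hatom i j) c

theorem ae_add_mulVec_ne_add_mulVec (hmeas : ∀ i j, Measurable fun ω => W ω i j)
    (hindep : iIndepFun (fun p : ι × κ => fun ω => W ω p.1 p.2) P)
    (hatom : ∀ i j x, P.map (fun ω => W ω i j) {x} = 0)
    {x₁ x₂ : ι → ℝ} (hx : x₁ ≠ x₂) (v₁ v₂ : κ → ℝ) :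
    ∀ᵐ ω ∂P, x₁ + W ω *ᵥ v₁ ≠ x₂ + W ω *ᵥ v₂ := by
  rcases eq_or_ne v₁ v₂ with rfl | hv
  · exact ae_of_all _ fun _ => by simpa using hx
  obtain ⟨i, -⟩ := Function.ne_iff.mp hx
  refine measure_eq_zero_iff_ae_notMem.mp (measure_mulVec_apply_eq_zero hmeas hindep hatom
    (sub_ne_zero.mpr hv) i (x₂ i - x₁ i)) |>.mono fun ω hω hcoll => hω ?_
  have hcoord := congrFun hcoll i
  simp only [Pi.add_apply] at hcoord
  simp only [Set.mem_ofPred_eq, mulVec_sub, Pi.sub_apply]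
  linarith

end

theorem residual_random_matrix_ae_injective_general
    {Ω : Type*} [MeasurableSpace Ω]
    (P : Measure Ω) [IsProbabilityMeasure P]
    (n m : ℕ)
    (g : (Fin n → ℝ) → (Fin m → ℝ))
    (H : Set (Fin n → ℝ)) (hH : H.Countable)
    (W : Ω → Matrix (Fin n) (Fin m) ℝ)
    (hmeas : ∀ (i : Fin n) (j : Fin m), Measurable (fun ω => W ω i j))
    (hindep : iIndepFun (m := fun _ : Fin n × Fin m => (inferInstance : MeasurableSpace ℝ))
      (fun p ω => W ω p.1 p.2) P)
    (hatomless : ∀ (i : Fin n) (j : Fin m) (x : ℝ),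
      P.map (fun ω => W ω i j) {x} = 0) :
    P {ω | ∀ h₁ ∈ H, ∀ h₂ ∈ H, h₁ ≠ h₂ →
        h₁ + (W ω).mulVec (g h₁) ≠ h₂ + (W ω).mulVec (g h₂)} = 1 := by
  have hae : ∀ᵐ ω ∂P, H.Pairwise fun h₁ h₂ => h₁ + W ω *ᵥ g h₁ ≠ h₂ + W ω *ᵥ g h₂ :=
    hH.ae_pairwise fun h₁ _ h₂ _ hne =>
      ae_add_mulVec_ne_add_mulVec hmeas hindep hatomless hne (g h₁) (g h₂)
  exact (measure_congr (ae_eq_univ.mpr hae)).trans measure_univ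

/-- **Residual sub-blocks with random output matrices are almost surely
injective on countable sets.** For any function `g : ℝⁿ → ℝᵐ`, a countable set
`H ⊆ ℝⁿ`, and a random `n × m` matrix `W` with mutually independent, atomless
entries, the map `h ↦ h + W g(h)` is almost surely injective on `H`. -/
theorem residual_random_matrix_ae_injective
    {Ω : Type*} [MeasurableSpace Ω]
    (P : Measure Ω) [IsProbabilityMeasure P]
    (n m : ℕ) (hn : 1 ≤ n) (hm : 1 ≤ m)
    (g : (Fin n → ℝ) → (Fin m → ℝ))
    (H : Set (Fin n → ℝ)) (hH : H.Countable)
    (W : Ω → Matrix (Fin n) (Fin m) ℝ)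
    (hmeas : ∀ (i : Fin n) (j : Fin m), Measurable (fun ω => W ω i j))
    (hindep : iIndepFun (m := fun _ : Fin n × Fin m => (inferInstance : MeasurableSpace ℝ))
      (fun p ω => W ω p.1 p.2) P)
    (hatomless : ∀ (i : Fin n) (j : Fin m) (x : ℝ),
      P.map (fun ω => W ω i j) {x} = 0) :
    P {ω | ∀ h₁ ∈ H, ∀ h₂ ∈ H, h₁ ≠ h₂ →
        h₁ + (W ω).mulVec (g h₁) ≠ h₂ + (W ω).mulVec (g h₂)} = 1 :=
  residual_random_matrix_ae_injective_general P n m g H hH W hmeas hindep hatomless
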